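/- Let (H, *, ≻, Δ) be an infinitesimal Hoch-bialgebra over a field K, and let H₊ := K ⊕ H be its unitalization, with 1 a two-sided unit for both extended operations. Define δ : H₊ → H₊ ⊗ H₊ by δ(1) := 1 ⊗ 1 and δ(x) := 1 ⊗ x + x ⊗ 1 + Δ(x) for x ∈ H, extended linearly. Then δ is coassociative and satisfies the unital infinitesimal relations: writing δ(a) = a₍₁₎ ⊗ a₍₂₎, for all a, b ∈ H₊ one has δ(a ≻ b) = a₍₁₎ ⊗ (a₍₂₎ ≻ b) + (a ≻ b₍₁₎) ⊗ b₍₂₎ − a ⊗ b and δ(a * b) = a₍₁₎ ⊗ (a₍₂₎ * b) + (a * b₍₁₎) ⊗ b₍₂₎ − a ⊗ b. -/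

import Mathlib

open scoped TensorProduct

/-- The extension of a bilinear operation `f` on `M` to the unitalization
`M₊ = K × M`, as a bilinear map, making `1 = (1, 0)` a two-sided unit:
`(λ·1 + a) ∘ (μ·1 + b) = λμ·1 + λb + μa + a ∘ b`. -/
noncomputable def unitalExtL {K M : Type*} [Field K] [AddCommGroup M] [Module K M]
    (f : M →ₗ[K] M →ₗ[K] M) : (K × M) →ₗ[K] (K × M) →ₗ[K] (K × M) :=
  LinearMap.mk₂ K (fun p q => (p.1 * q.1, p.1 • q.2 + q.1 • p.2 + f p.2 q.2))
    (fun p p' q => by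
      refine Prod.ext ?_ ?_ <;>
        simp [add_mul, add_smul, smul_add] <;> abel)
    (fun c p q => by
      refine Prod.ext ?_ ?_ <;>
        simp [mul_assoc, smul_smul, smul_add, smul_comm c] <;> ring_nf)
    (fun p q q' => by
      refine Prod.ext ?_ ?_ <;>
        simp [mul_add, add_smul, smul_add] <;> abel)
    (fun c p q => by
      refine Prod.ext ?_ ?_ <;>
        simp [mul_assoc, smul_smul, smul_comm c, mul_comm] <;> ring_nf)

/-- The unit `1 = (1, 0)` of the unitalization `K × M`. -/
def unitOne (K M : Type*) [Field K] [AddCommGroup M] [Module K M] : K × M := (1, 0)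

/-- The coproduct `δ` on the unitalization `H₊ = K × H`, defined by
`δ(1) = 1 ⊗ 1` and `δ(x) = 1 ⊗ x + x ⊗ 1 + Δ(x)` for `x ∈ H`, extended linearly. -/
noncomputable def unitalDelta {K M : Type*} [Field K] [AddCommGroup M] [Module K M]
    (Δ : M →ₗ[K] M ⊗[K] M) : (K × M) →ₗ[K] (K × M) ⊗[K] (K × M) :=
  LinearMap.coprod
    (LinearMap.toSpanSingleton K ((K × M) ⊗[K] (K × M))
      (unitOne K M ⊗ₜ[K] unitOne K M))
    ((TensorProduct.mk K (K × M) (K × M) (unitOne K M)) ∘ₗ (LinearMap.inr K K M)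
      + ((TensorProduct.mk K (K × M) (K × M)).flip (unitOne K M)) ∘ₗ (LinearMap.inr K K M)
      + (TensorProduct.map (LinearMap.inr K K M) (LinearMap.inr K K M)) ∘ₗ Δ)

/-!
Every identity in question is linear in each argument, and `K × M` is spanned by the unit
`1 = (1, 0)` together with the copy `(0, x)` of `M`, so it suffices to check it on these elements.
When an argument is `1` everything follows from `δ 1 = 1 ⊗ 1` and `1` being a two-sided unit.
For `x, y ∈ M`, the summands `1 ⊗ x` of `δ x` and `y ⊗ 1` of `δ y` each contribute `x ⊗ y`;
after subtracting `x ⊗ y` once, the remaining copy is exactly the extra term of the nonunital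
relation for `Δ (x ∘ y)`. Likewise, in `(δ ⊗ id) (δ x) = (id ⊗ δ) (δ x)` all summands with a
factor `1` match up, leaving the coassociativity of `Δ`.
-/

namespace TensorProduct

variable {R A B C A' B' : Type*} [CommSemiring R] [AddCommMonoid A] [AddCommMonoid B]
  [AddCommMonoid C] [AddCommMonoid A'] [AddCommMonoid B'] [Module R A] [Module R B] [Module R C]
  [Module R A'] [Module R B']

theorem assoc_map_mk_comp (u : C) (f : A →ₗ[R] A') (g : B →ₗ[R] B') (t : A ⊗[R] B) :
    TensorProduct.assoc R C A' B' (map (mk R C A' u ∘ₗ f) g t) = u ⊗ₜ map f g t := by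
  induction t using TensorProduct.induction_on with
  | zero => simp
  | tmul a b => simp
  | add t₁ t₂ h₁ h₂ => simp only [map_add, h₁, h₂, tmul_add]

theorem assoc_map_mk_flip_comp (u : C) (f : A →ₗ[R] A') (g : B →ₗ[R] B') (t : A ⊗[R] B) :
    TensorProduct.assoc R A' C B' (map ((mk R A' C).flip u ∘ₗ f) g t)
      = map f (mk R C B' u ∘ₗ g) t := by
  induction t using TensorProduct.induction_on with
  | zero => simp
  | tmul a b => simp
  | add t₁ t₂ h₁ h₂ => simp only [map_add, h₁, h₂]

theorem assoc_map_tmul (f : A →ₗ[R] A') (g : B →ₗ[R] B') (t : A ⊗[R] B) (u : C) :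
    TensorProduct.assoc R A' B' C (map f g t ⊗ₜ u) = map f ((mk R B' C).flip u ∘ₗ g) t := by
  induction t using TensorProduct.induction_on with
  | zero => simp
  | tmul a b => simp
  | add t₁ t₂ h₁ h₂ => simp only [map_add, add_tmul, h₁, h₂]

theorem assoc_map_map_comp {D E F : Type*} [AddCommMonoid D] [AddCommMonoid E] [AddCommMonoid F]
    [Module R D] [Module R E] [Module R F]
    (f : A →ₗ[R] A') (g : D →ₗ[R] B') (h : E →ₗ[R] F) (d : B →ₗ[R] A ⊗[R] D) (t : B ⊗[R] E) :
    TensorProduct.assoc R A' B' F (map (map f g ∘ₗ d) h t)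
      = map f (map g h) (TensorProduct.assoc R A D E (LinearMap.rTensor E d t)) := by
  rw [← LinearMap.map_rTensor, map_map_assoc]

end TensorProduct

section Unitalization

open LinearMap TensorProduct

variable {K M : Type*} [Field K] [AddCommGroup M] [Module K M]

local notation "ι" => LinearMap.inr K K M

theorem mk_eq_smul_unitOne_add_inr (c : K) (x : M) :
    ((c, x) : K × M) = c • unitOne K M + ((0 : K), x) := by
  simp [unitOne]

section UnitalExtension

variable (f : M →ₗ[K] M →ₗ[K] M)

theorem unitalExtL_apply (p q : K × M) :
    unitalExtL f p q = (p.1 * q.1, p.1 • q.2 + q.1 • p.2 + f p.2 q.2) := rfl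

@[simp]
theorem unitalExtL_unitOne_left (p : K × M) : unitalExtL f (unitOne K M) p = p := by
  simp [unitalExtL_apply, unitOne]

@[simp]
theorem unitalExtL_unitOne_right (p : K × M) : unitalExtL f p (unitOne K M) = p := by
  simp [unitalExtL_apply, unitOne]

@[simp]
theorem unitalExtL_inr_inr (x y : M) :
    unitalExtL f ((0 : K), x) ((0 : K), y) = ((0 : K), f x y) := by
  simp [unitalExtL_apply]

@[simp]
theorem unitalExtL_unitOne_comp_inr : unitalExtL f (unitOne K M) ∘ₗ ι = ι :=
  LinearMap.ext fun _ => by simp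

@[simp]
theorem unitalExtL_flip_unitOne_comp_inr : (unitalExtL f).flip (unitOne K M) ∘ₗ ι = ι :=
  LinearMap.ext fun _ => by simp

@[simp]
theorem unitalExtL_inr_comp_inr (x : M) : unitalExtL f ((0 : K), x) ∘ₗ ι = ι ∘ₗ f x :=
  LinearMap.ext fun _ => by simp

@[simp]
theorem unitalExtL_flip_inr_comp_inr (y : M) :
    (unitalExtL f).flip ((0 : K), y) ∘ₗ ι = ι ∘ₗ f.flip y :=
  LinearMap.ext fun _ => by simp

end UnitalExtension

variable (Δ : M →ₗ[K] M ⊗[K] M)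

@[simp]
theorem unitalDelta_unitOne : unitalDelta Δ (unitOne K M) = unitOne K M ⊗ₜ unitOne K M := by
  simp [unitalDelta, unitOne, Prod.mk_zero_zero]

@[simp]
theorem unitalDelta_inr (x : M) :
    unitalDelta Δ ((0 : K), x)
      = unitOne K M ⊗ₜ ((0 : K), x) + ((0 : K), x) ⊗ₜ unitOne K M + map ι ι (Δ x) := by
  simp [unitalDelta]

theorem unitalDelta_comp_inr :
    unitalDelta Δ ∘ₗ ι
      = mk K (K × M) (K × M) (unitOne K M) ∘ₗ ι + (mk K (K × M) (K × M)).flip (unitOne K M) ∘ₗ ι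
        + map ι ι ∘ₗ Δ :=
  coprod_inr _ _

theorem unitalDelta_unitalExtL (f : M →ₗ[K] M →ₗ[K] M)
    (hΔf : ∀ x y : M, Δ (f x y)
        = lTensor M (f.flip y) (Δ x) + rTensor M (f x) (Δ y) + x ⊗ₜ[K] y)
    (a b : K × M) :
    unitalDelta Δ (unitalExtL f a b)
      = lTensor (K × M) ((unitalExtL f).flip b) (unitalDelta Δ a)
        + rTensor (K × M) (unitalExtL f a) (unitalDelta Δ b) - a ⊗ₜ[K] b := by
  obtain ⟨c, x⟩ := a
  obtain ⟨d, y⟩ := b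
  rw [mk_eq_smul_unitOne_add_inr c x, mk_eq_smul_unitOne_add_inr d y]
  simp only [map_add, map_smul, LinearMap.add_apply, LinearMap.smul_apply, lTensor_add,
    lTensor_smul, rTensor_add, rTensor_smul, unitalExtL_unitOne_left, unitalExtL_unitOne_right,
    unitalExtL_inr_inr, unitalDelta_unitOne, unitalDelta_inr, hΔf, lTensor_tmul, rTensor_tmul,
    flip_apply, lTensor_map, rTensor_map, map_lTensor, map_rTensor, unitalExtL_unitOne_comp_inr,
    unitalExtL_flip_unitOne_comp_inr, unitalExtL_inr_comp_inr, unitalExtL_flip_inr_comp_inr,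
    map_tmul, inr_apply, tmul_add, add_tmul, tmul_smul, ← smul_tmul', smul_add]
  module

theorem unitalDelta_coassoc
    (hcoassoc : ∀ x : M,
      TensorProduct.assoc K M M M (rTensor M Δ (Δ x)) = lTensor M Δ (Δ x))
    (a : K × M) :
    TensorProduct.assoc K (K × M) (K × M) (K × M)
        (rTensor (K × M) (unitalDelta Δ) (unitalDelta Δ a))
      = lTensor (K × M) (unitalDelta Δ) (unitalDelta Δ a) := by
  obtain ⟨c, x⟩ := a
  rw [mk_eq_smul_unitOne_add_inr c x]
  simp only [map_add, map_smul, unitalDelta_unitOne, unitalDelta_inr, rTensor_tmul, lTensor_tmul,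
    rTensor_map, lTensor_map, unitalDelta_comp_inr, map_add_left, map_add_right,
    LinearMap.add_apply, assoc_tmul, add_tmul, tmul_add, assoc_map_mk_comp,
    assoc_map_mk_flip_comp, assoc_map_tmul, assoc_map_map_comp, hcoassoc, map_lTensor]
  abel

end Unitalization

theorem stmt11_general (K : Type*) [Field K] (M : Type*) [AddCommGroup M] [Module K M]
    (m s : M →ₗ[K] M →ₗ[K] M)
    (Δ : M →ₗ[K] M ⊗[K] M)
    (hcoassoc : ∀ x : M,
      (TensorProduct.assoc K M M M) (LinearMap.rTensor M Δ (Δ x))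
        = LinearMap.lTensor M Δ (Δ x))
    (hΔs : ∀ x y : M, Δ (s x y)
        = LinearMap.lTensor M (s.flip y) (Δ x)
          + LinearMap.rTensor M (s x) (Δ y) + x ⊗ₜ[K] y)
    (hΔm : ∀ x y : M, Δ (m x y)
        = LinearMap.lTensor M (m.flip y) (Δ x)
          + LinearMap.rTensor M (m x) (Δ y) + x ⊗ₜ[K] y) :
    (∀ a : K × M,
      (TensorProduct.assoc K (K × M) (K × M) (K × M))
          (LinearMap.rTensor (K × M) (unitalDelta Δ) (unitalDelta Δ a))
        = LinearMap.lTensor (K × M) (unitalDelta Δ) (unitalDelta Δ a)) ∧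
    (∀ a b : K × M, unitalDelta Δ (unitalExtL s a b)
        = LinearMap.lTensor (K × M) ((unitalExtL s).flip b) (unitalDelta Δ a)
          + LinearMap.rTensor (K × M) (unitalExtL s a) (unitalDelta Δ b)
          - a ⊗ₜ[K] b) ∧
    (∀ a b : K × M, unitalDelta Δ (unitalExtL m a b)
        = LinearMap.lTensor (K × M) ((unitalExtL m).flip b) (unitalDelta Δ a)
          + LinearMap.rTensor (K × M) (unitalExtL m a) (unitalDelta Δ b)
          - a ⊗ₜ[K] b) :=
  ⟨unitalDelta_coassoc Δ hcoassoc, unitalDelta_unitalExtL Δ s hΔs, unitalDelta_unitalExtL Δ m hΔm⟩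

/-- Let `(H, m, s, Δ)` be an infinitesimal Hoch-bialgebra and
`H₊ = K × H` its unitalization.  The coproduct `δ` with `δ(1) = 1 ⊗ 1` and
`δ(x) = 1 ⊗ x + x ⊗ 1 + Δ(x)` for `x ∈ H` is coassociative and satisfies the
unital infinitesimal relations
`δ(a ∘ b) = a₍₁₎ ⊗ (a₍₂₎ ∘ b) + (a ∘ b₍₁₎) ⊗ b₍₂₎ − a ⊗ b` for `∘ ∈ {*, ≻}`. -/
theorem stmt11 (K : Type*) [Field K] (M : Type*) [AddCommGroup M] [Module K M]
    (m s : M →ₗ[K] M →ₗ[K] M)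
    (hassoc : ∀ x y z : M, m (m x y) z = m x (m y z))
    (hcocycle : ∀ x y z : M,
      m (s x y) z + s (m x y) z = s x (m y z) + m x (s y z))
    (Δ : M →ₗ[K] M ⊗[K] M)
    (hcoassoc : ∀ x : M,
      (TensorProduct.assoc K M M M) (LinearMap.rTensor M Δ (Δ x))
        = LinearMap.lTensor M Δ (Δ x))
    (hΔs : ∀ x y : M, Δ (s x y)
        = LinearMap.lTensor M (s.flip y) (Δ x)
          + LinearMap.rTensor M (s x) (Δ y) + x ⊗ₜ[K] y)
    (hΔm : ∀ x y : M, Δ (m x y)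
        = LinearMap.lTensor M (m.flip y) (Δ x)
          + LinearMap.rTensor M (m x) (Δ y) + x ⊗ₜ[K] y) :
    (∀ a : K × M,
      (TensorProduct.assoc K (K × M) (K × M) (K × M))
          (LinearMap.rTensor (K × M) (unitalDelta Δ) (unitalDelta Δ a))
        = LinearMap.lTensor (K × M) (unitalDelta Δ) (unitalDelta Δ a)) ∧
    (∀ a b : K × M, unitalDelta Δ (unitalExtL s a b)
        = LinearMap.lTensor (K × M) ((unitalExtL s).flip b) (unitalDelta Δ a)
          + LinearMap.rTensor (K × M) (unitalExtL s a) (unitalDelta Δ b)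
          - a ⊗ₜ[K] b) ∧
    (∀ a b : K × M, unitalDelta Δ (unitalExtL m a b)
        = LinearMap.lTensor (K × M) ((unitalExtL m).flip b) (unitalDelta Δ a)
          + LinearMap.rTensor (K × M) (unitalExtL m a) (unitalDelta Δ b)
          - a ⊗ₜ[K] b) :=
  stmt11_general K M m s Δ hcoassoc hΔs hΔm
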